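/- arXiv:2101.02080 — 3 statements merged into one kernel-verified Lean document; each statement's English description precedes it below -/
import Mathlib

section
/- Let ρ : ℝ³ × ℝ → ℝ, ū : ℝ³ × ℝ → ℝ³ and λ : ℝ³ × ℝ → Mat₃(ℝ) be C¹; set ξ = I + λ, u_i = Σ_j ū_j ξ^j_i, and ε_{ki}^{j₁j₂} = ξ^{j₁}_k ξ^{j₂}_i − δ^{j₁}_k δ^{j₂}_i. Suppose at a point (x, t) the unexcited momentum equation ρ ∂_t ū_i + ρ Σ_k ū_k ∂_k ū_i = g_i^{(1)} and the excited momentum equation ρ ∂_t u_i + ρ Σ_k u_k ∂_k u_i = g_i^{(2)} both hold. Then at (x, t), for each i: ρ ∂_t(Σ_j ū_j λ^j_i) + ρ Σ_{k,j₁,j₂} ū_{j₁} [ (∂_k ū_{j₂}) ε_{ki}^{j₁j₂} + ū_{j₂} ξ^{j₁}_k (∂_k λ^{j₂}_i) ] = g_i^{(2)} − g_i^{(1)}. (Excited equation 1, momentum equation of the excitation process.) -/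
open scoped BigOperators

/-- Spatial partial derivative `∂_i` of a scalar field on `ℝ³ × ℝ`. -/
noncomputable def pd (i : Fin 3) (f : (Fin 3 → ℝ) × ℝ → ℝ) (p : (Fin 3 → ℝ) × ℝ) : ℝ :=
  fderiv ℝ f p (Pi.single i 1, 0)

/-- Time partial derivative `∂_t` of a scalar field on `ℝ³ × ℝ`. -/
noncomputable def pt (f : (Fin 3 → ℝ) × ℝ → ℝ) (p : (Fin 3 → ℝ) × ℝ) : ℝ :=
  fderiv ℝ f p (0, 1)

private lemma fderiv_sum_mul3
    (F G : Fin 3 → ((Fin 3 → ℝ) × ℝ → ℝ)) (p : (Fin 3 → ℝ) × ℝ)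
    (hF : ∀ j, DifferentiableAt ℝ (F j) p) (hG : ∀ j, DifferentiableAt ℝ (G j) p)
    (v : (Fin 3 → ℝ) × ℝ) :
    fderiv ℝ (fun q => ∑ j : Fin 3, F j q * G j q) p v
      = ∑ j : Fin 3, (fderiv ℝ (F j) p v * G j p + F j p * fderiv ℝ (G j) p v) := by
  rw [fderiv_fun_sum (A := fun j q => F j q * G j q) (fun j _ => ((hF j).mul (hG j)))]
  simp only [ContinuousLinearMap.sum_apply]
  refine Finset.sum_congr rfl fun j _ => ?_
  rw [fderiv_fun_mul (hF j) (hG j)]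
  simp only [ContinuousLinearMap.add_apply, ContinuousLinearMap.smul_apply, smul_eq_mul]
  ring

set_option maxHeartbeats 2000000 in
/-- Excited equation 1, momentum equation of the excitation process: if the unexcited
momentum equation (with force `g1`) and the excited momentum equation (with force `g2`)
both hold at a point, then the velocity strain tensor satisfies the difference momentum
equation there, with `ε_{ki}^{j₁j₂} = ξ^{j₁}_k ξ^{j₂}_i − δ^{j₁}_k δ^{j₂}_i`. -/
theorem excited_equation_one_momentum
    (ρ : (Fin 3 → ℝ) × ℝ → ℝ) (ubar : (Fin 3 → ℝ) × ℝ → Fin 3 → ℝ)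
    (lam : (Fin 3 → ℝ) × ℝ → Fin 3 → Fin 3 → ℝ)
    (hρ : ContDiff ℝ 1 ρ) (hubar : ContDiff ℝ 1 ubar) (hlam : ContDiff ℝ 1 lam)
    (ξ : (Fin 3 → ℝ) × ℝ → Fin 3 → Fin 3 → ℝ)
    (hξ : ξ = fun p a b => (if a = b then (1 : ℝ) else 0) + lam p a b)
    (u : (Fin 3 → ℝ) × ℝ → Fin 3 → ℝ)
    (hu : u = fun p i => ∑ j : Fin 3, ubar p j * ξ p j i)
    (g1 g2 : (Fin 3 → ℝ) × ℝ → Fin 3 → ℝ)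
    (x : Fin 3 → ℝ) (t : ℝ)
    (hmom1 : ∀ i : Fin 3,
      ρ (x, t) * pt (fun q => ubar q i) (x, t)
        + ρ (x, t) * ∑ k : Fin 3, ubar (x, t) k * pd k (fun q => ubar q i) (x, t)
      = g1 (x, t) i)
    (hmom2 : ∀ i : Fin 3,
      ρ (x, t) * pt (fun q => u q i) (x, t)
        + ρ (x, t) * ∑ k : Fin 3, u (x, t) k * pd k (fun q => u q i) (x, t)
      = g2 (x, t) i) :
    ∀ i : Fin 3,
      ρ (x, t) * pt (fun q => ∑ j : Fin 3, ubar q j * lam q j i) (x, t)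
        + ρ (x, t) * ∑ k : Fin 3, ∑ j₁ : Fin 3, ∑ j₂ : Fin 3,
            ubar (x, t) j₁ *
              (pd k (fun q => ubar q j₂) (x, t) *
                  (ξ (x, t) j₁ k * ξ (x, t) j₂ i
                    - (if j₁ = k then (1 : ℝ) else 0) * (if j₂ = i then (1 : ℝ) else 0))
                + ubar (x, t) j₂ * (ξ (x, t) j₁ k * pd k (fun q => lam q j₂ i) (x, t)))
      = g2 (x, t) i - g1 (x, t) i := by
  subst hξ hu
  have hub : ∀ j, DifferentiableAt ℝ (fun q => ubar q j) (x, t) :=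
    fun j => ((contDiff_pi.mp hubar j).differentiable one_ne_zero).differentiableAt
  have hl : ∀ j i, DifferentiableAt ℝ (fun q => lam q j i) (x, t) :=
    fun j i => ((contDiff_pi.mp (contDiff_pi.mp hlam j) i).differentiable one_ne_zero).differentiableAt
  have key : ∀ (v : (Fin 3 → ℝ) × ℝ) (i : Fin 3),
      fderiv ℝ (fun q => ∑ j : Fin 3,
          ubar q j * ((if j = i then (1:ℝ) else 0) + lam q j i)) (x, t) v
        = ∑ j : Fin 3,
            (fderiv ℝ (fun q => ubar q j) (x, t) v
                * ((if j = i then (1:ℝ) else 0) + lam (x, t) j i)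
              + ubar (x, t) j * fderiv ℝ (fun q => lam q j i) (x, t) v) := by
    intro v i
    rw [fderiv_sum_mul3 _ (fun j q => (if j = i then (1:ℝ) else 0) + lam q j i) _ hub
      (fun j => (differentiableAt_const _).add (hl j i)) v]
    refine Finset.sum_congr rfl fun j _ => ?_
    rw [fderiv_const_add]
  have key2 : ∀ (v : (Fin 3 → ℝ) × ℝ) (i : Fin 3),
      fderiv ℝ (fun q => ∑ j : Fin 3, ubar q j * lam q j i) (x, t) v
        = ∑ j : Fin 3,
            (fderiv ℝ (fun q => ubar q j) (x, t) v * lam (x, t) j i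
              + ubar (x, t) j * fderiv ℝ (fun q => lam q j i) (x, t) v) :=
    fun v i => fderiv_sum_mul3 _ _ _ hub (fun j => hl j i) v
  intro i
  have h1 := hmom1 i
  have h2 := hmom2 i
  simp only [pt, pd] at h1 h2 ⊢
  rw [key2]
  simp only [key] at h2
  simp only [mul_ite, ite_mul, mul_one, mul_zero, one_mul, zero_mul, mul_add, add_mul,
    mul_sub, sub_mul, Finset.sum_add_distrib, Finset.sum_sub_distrib, Finset.sum_ite_eq,
    Finset.sum_ite_eq', Finset.mem_univ, if_true, ite_true, add_zero, zero_add,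
    sub_zero, Finset.mul_sum, Finset.sum_mul] at h2 ⊢
  rw [← h1, ← h2]
  simp only [Fin.sum_univ_three, Fin.reduceEq, ite_true, ite_false, if_true, if_false,
    reduceIte, add_zero, zero_add]
  ring
end

section
/- Let p⁽¹⁾, p⁽²⁾ : ℝ³ × ℝ → ℝ, ū : ℝ³ × ℝ → ℝ³ and λ : ℝ³ × ℝ → Mat₃(ℝ) be C², set ξ = I + λ, and let μ, ψ be real constants. Define σ⁽¹⁾_{ik} = −p⁽¹⁾ δ_{ik} + ψ μ (Σ_s ∂_s ū_s) δ_{ik} + μ(∂_k ū_i + ∂_i ū_k) and σ⁽²⁾_{ik} = −p⁽²⁾ δ_{ik} + ψ μ Σ_{s,t} [ (∂_s ū_t) ξ^t_s + ū_t (∂_s ξ^t_s) ] δ_{ik} + μ Σ_j [ (∂_k ū_j) ξ^j_i + ū_j (∂_k ξ^j_i) + (∂_i ū_j) ξ^j_k + ū_j (∂_i ξ^j_k) ]. Suppose at a point (x₀, t₀): λ(x₀, t₀) = 0 and Σ_s ∂_s λ^t_s (x₀, t₀) = 0 for every t. Then at (x₀, t₀), for each i, the excited external force field g_i = Σ_k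 ∂_k σ⁽²⁾_{ik} − Σ_k ∂_k σ⁽¹⁾_{ik} equals: ∂_i p⁽¹⁾ − ∂_i p⁽²⁾ + μ Σ_{j,k} (∂_k ū_j)(∂_k λ^j_i) + ψ μ Σ_{j,k} [ (∂_k ū_j)(∂_i λ^j_k) + ū_j (∂_i ∂_k λ^j_k) ] + μ Σ_{j,k} [ (∂_k ū_j)(∂_k λ^j_i) + ū_j (∂_k ∂_k λ^j_i) ] + μ Σ_{j,k} [ (∂_k ū_j)(∂_i λ^j_k) + ū_j (∂_i ∂_k λ^j_k) ]. (Stress-state analysis: formula for the excited external force field at the initial point of the excited state.) -/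
open scoped BigOperators

section Aux

variable {f g : (Fin 3 → ℝ) × ℝ → ℝ} {p : (Fin 3 → ℝ) × ℝ} {i : Fin 3}

theorem pd_add' (hf : DifferentiableAt ℝ f p) (hg : DifferentiableAt ℝ g p) :
    pd i (fun q => f q + g q) p = pd i f p + pd i g p := by
  unfold pd; rw [fderiv_fun_add hf hg]; simp

theorem pd_sub' (hf : DifferentiableAt ℝ f p) (hg : DifferentiableAt ℝ g p) :
    pd i (fun q => f q - g q) p = pd i f p - pd i g p := by
  unfold pd; rw [fderiv_fun_sub hf hg]; simp

theorem pd_mul' (hf : DifferentiableAt ℝ f p) (hg : DifferentiableAt ℝ g p) :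
    pd i (fun q => f q * g q) p = f p * pd i g p + g p * pd i f p := by
  unfold pd; rw [fderiv_fun_mul hf hg]; simp

theorem pd_const_add' (c : ℝ) : pd i (fun q => c + f q) p = pd i f p := by
  unfold pd; rw [fderiv_const_add]

theorem pd_const_mul' (hf : DifferentiableAt ℝ f p) (c : ℝ) :
    pd i (fun q => c * f q) p = c * pd i f p := by
  unfold pd; rw [fderiv_const_mul hf]; simp

theorem pd_mul_const' (hf : DifferentiableAt ℝ f p) (c : ℝ) :
    pd i (fun q => f q * c) p = pd i f p * c := by
  unfold pd; rw [fderiv_mul_const hf]; simp [mul_comm]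

theorem pd_sum' (F : Fin 3 → (Fin 3 → ℝ) × ℝ → ℝ) (h : ∀ j, DifferentiableAt ℝ (F j) p) :
    pd i (fun q => ∑ j : Fin 3, F j q) p = ∑ j : Fin 3, pd i (F j) p := by
  unfold pd; rw [fderiv_fun_sum (fun j _ => h j)]; simp

theorem contDiff_pd' (hf : ContDiff ℝ 2 f) (i : Fin 3) : ContDiff ℝ 1 (pd i f) :=
  (hf.fderiv_right (m := 1) (by norm_num)).clm_apply contDiff_const

theorem diff_pd' (hf : ContDiff ℝ 2 f) (i : Fin 3) : Differentiable ℝ (pd i f) :=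
  (contDiff_pd' hf i).differentiable one_ne_zero

theorem pd_pd_comm' (hf : ContDiff ℝ 2 f) (i k : Fin 3) (p : (Fin 3 → ℝ) × ℝ) :
    pd i (pd k f) p = pd k (pd i f) p := by
  have hd : DifferentiableAt ℝ (fderiv ℝ f) p :=
    ((hf.fderiv_right (m := 1) (by norm_num)).differentiable one_ne_zero) p
  have key : ∀ a b : Fin 3, pd a (pd b f) p
      = fderiv ℝ (fderiv ℝ f) p (Pi.single a 1, 0) (Pi.single b 1, 0) := by
    intro a b
    show fderiv ℝ (fun q => fderiv ℝ f q (Pi.single b 1, 0)) p (Pi.single a 1, 0) = _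
    rw [fderiv_clm_apply hd (differentiableAt_const _)]
    simp
  rw [key, key]
  exact (hf.contDiffAt.isSymmSndFDerivAt (by simp)) _ _

end Aux

/-- Stress-state analysis: formula for the excited external force field
`g_i = Σ_k ∂_k σ⁽²⁾_{ik} − Σ_k ∂_k σ⁽¹⁾_{ik}` at the initial point of the excited state,
where `λ` vanishes and has vanishing row divergence. -/
theorem excited_external_force_field
    (p1 p2 : (Fin 3 → ℝ) × ℝ → ℝ) (ubar : (Fin 3 → ℝ) × ℝ → Fin 3 → ℝ)
    (lam : (Fin 3 → ℝ) × ℝ → Fin 3 → Fin 3 → ℝ)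
    (hp1 : ContDiff ℝ 2 p1) (hp2 : ContDiff ℝ 2 p2)
    (hubar : ContDiff ℝ 2 ubar) (hlam : ContDiff ℝ 2 lam)
    (ξ : (Fin 3 → ℝ) × ℝ → Fin 3 → Fin 3 → ℝ)
    (hξ : ξ = fun p a b => (if a = b then (1 : ℝ) else 0) + lam p a b)
    (μ ψ : ℝ)
    (σ1 : (Fin 3 → ℝ) × ℝ → Fin 3 → Fin 3 → ℝ)
    (hσ1 : σ1 = fun p i k =>
      -p1 p * (if i = k then (1 : ℝ) else 0)
        + ψ * μ * (∑ s : Fin 3, pd s (fun q => ubar q s) p) * (if i = k then (1 : ℝ) else 0)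
        + μ * (pd k (fun q => ubar q i) p + pd i (fun q => ubar q k) p))
    (σ2 : (Fin 3 → ℝ) × ℝ → Fin 3 → Fin 3 → ℝ)
    (hσ2 : σ2 = fun p i k =>
      -p2 p * (if i = k then (1 : ℝ) else 0)
        + ψ * μ * (∑ s : Fin 3, ∑ t : Fin 3,
            (pd s (fun q => ubar q t) p * ξ p t s + ubar p t * pd s (fun q => ξ q t s) p))
            * (if i = k then (1 : ℝ) else 0)
        + μ * ∑ j : Fin 3,
            (pd k (fun q => ubar q j) p * ξ p j i + ubar p j * pd k (fun q => ξ q j i) p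
              + pd i (fun q => ubar q j) p * ξ p j k + ubar p j * pd i (fun q => ξ q j k) p))
    (x₀ : Fin 3 → ℝ) (t₀ : ℝ)
    (hz : lam (x₀, t₀) = 0)
    (hdiv : ∀ t : Fin 3, ∑ s : Fin 3, pd s (fun q => lam q t s) (x₀, t₀) = 0) :
    ∀ i : Fin 3,
      ∑ k : Fin 3, pd k (fun q => σ2 q i k) (x₀, t₀)
        - ∑ k : Fin 3, pd k (fun q => σ1 q i k) (x₀, t₀)
      = pd i p1 (x₀, t₀) - pd i p2 (x₀, t₀)
        + μ * ∑ j : Fin 3, ∑ k : Fin 3,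
            pd k (fun q => ubar q j) (x₀, t₀) * pd k (fun q => lam q j i) (x₀, t₀)
        + ψ * μ * ∑ j : Fin 3, ∑ k : Fin 3,
            (pd k (fun q => ubar q j) (x₀, t₀) * pd i (fun q => lam q j k) (x₀, t₀)
              + ubar (x₀, t₀) j * pd i (pd k (fun q => lam q j k)) (x₀, t₀))
        + μ * ∑ j : Fin 3, ∑ k : Fin 3,
            (pd k (fun q => ubar q j) (x₀, t₀) * pd k (fun q => lam q j i) (x₀, t₀)
              + ubar (x₀, t₀) j * pd k (pd k (fun q => lam q j i)) (x₀, t₀))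
        + μ * ∑ j : Fin 3, ∑ k : Fin 3,
            (pd k (fun q => ubar q j) (x₀, t₀) * pd i (fun q => lam q j k) (x₀, t₀)
              + ubar (x₀, t₀) j * pd i (pd k (fun q => lam q j k)) (x₀, t₀)) := by
  intro i
  -- basic smoothness of components
  have hu : ∀ j : Fin 3, ContDiff ℝ 2 (fun q => ubar q j) := fun j => contDiff_pi.1 hubar j
  have hl : ∀ a b : Fin 3, ContDiff ℝ 2 (fun q => lam q a b) := fun a b =>
    contDiff_pi.1 (contDiff_pi.1 hlam a) b
  have dp1 : Differentiable ℝ p1 := hp1.differentiable two_ne_zero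
  have dp2 : Differentiable ℝ p2 := hp2.differentiable two_ne_zero
  have du : ∀ j : Fin 3, Differentiable ℝ (fun q => ubar q j) := fun j =>
    (hu j).differentiable two_ne_zero
  have dl : ∀ a b : Fin 3, Differentiable ℝ (fun q => lam q a b) := fun a b =>
    (hl a b).differentiable two_ne_zero
  have dpu : ∀ (s j : Fin 3), Differentiable ℝ (pd s (fun q => ubar q j)) := fun s j =>
    diff_pd' (hu j) s
  have dpl : ∀ (s a b : Fin 3), Differentiable ℝ (pd s (fun q => lam q a b)) := fun s a b =>
    diff_pd' (hl a b) s
  have hz' : ∀ a b : Fin 3, lam (x₀, t₀) a b = 0 := fun a b => by simp [hz]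
  -- the auxiliary scalar fields
  set A : (Fin 3 → ℝ) × ℝ → ℝ := fun q => ∑ s : Fin 3, ∑ t : Fin 3,
      (pd s (fun q' => ubar q' t) q * lam q t s + ubar q t * pd s (fun q' => lam q' t s) q)
    with hA
  set B : Fin 3 → (Fin 3 → ℝ) × ℝ → ℝ := fun k q => ∑ j : Fin 3,
      (pd k (fun q' => ubar q' j) q * lam q j i + ubar q j * pd k (fun q' => lam q' j i) q
        + pd i (fun q' => ubar q' j) q * lam q j k + ubar q j * pd i (fun q' => lam q' j k) q)
    with hB
  have dA : Differentiable ℝ A := by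
    rw [hA]
    exact Differentiable.fun_sum fun s _ => Differentiable.fun_sum fun t _ =>
      ((dpu s t).mul (dl t s)).add ((du t).mul (dpl s t s))
  have dB : ∀ k : Fin 3, Differentiable ℝ (B k) := by
    intro k
    simp only [hB]
    exact Differentiable.fun_sum fun j _ =>
      ((((dpu k j).mul (dl j i)).add ((du j).mul (dpl k j i))).add
        ((dpu i j).mul (dl j k))).add ((du j).mul (dpl i j k))
  have dσ1 : ∀ k : Fin 3, Differentiable ℝ (fun q => σ1 q i k) := by
    intro k
    simp only [hσ1]
    exact ((dp1.neg.mul_const _).add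
      (((Differentiable.fun_sum fun s _ => dpu s s).const_mul _).mul_const _)).add
      (((dpu k i).add (dpu i k)).const_mul _)
  have dΔ : ∀ k : Fin 3, Differentiable ℝ (fun q =>
      (p1 q - p2 q) * (if i = k then (1 : ℝ) else 0)
        + ψ * μ * A q * (if i = k then (1 : ℝ) else 0) + μ * B k q) := fun k =>
    (((dp1.sub dp2).mul_const _).add ((dA.const_mul _).mul_const _)).add ((dB k).const_mul _)
  -- split σ2 into σ1 plus a correction
  have hsplit : ∀ k : Fin 3, pd k (fun q => σ2 q i k) (x₀, t₀)
      = pd k (fun q => σ1 q i k) (x₀, t₀)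
        + ((pd k p1 (x₀, t₀) - pd k p2 (x₀, t₀)) * (if i = k then (1 : ℝ) else 0)
          + ψ * μ * pd k A (x₀, t₀) * (if i = k then (1 : ℝ) else 0)
          + μ * pd k (B k) (x₀, t₀)) := by
    intro k
    have hfun : (fun q => σ2 q i k) = fun q => σ1 q i k
        + ((p1 q - p2 q) * (if i = k then (1 : ℝ) else 0)
          + ψ * μ * A q * (if i = k then (1 : ℝ) else 0) + μ * B k q) := by
      funext q
      have hcol : ∀ (g : Fin 3 → ℝ) (s : Fin 3),
          ∑ t : Fin 3, g t * (if t = s then (1 : ℝ) else 0) = g s := by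
        intro g s; simp
      simp only [hσ1, hσ2, hξ, hA, hB, pd_const_add']
      simp only [mul_add, Finset.sum_add_distrib, hcol]
      ring
    rw [hfun, pd_add' ((dσ1 k) _) ((dΔ k) _),
      pd_add' ((((dp1.fun_sub dp2).mul_const _).fun_add ((dA.const_mul _).mul_const _)) _)
        (((dB k).const_mul _) _),
      pd_add' (((dp1.fun_sub dp2).mul_const _) _) (((dA.const_mul _).mul_const _) _),
      pd_mul_const' ((dp1.fun_sub dp2) _), pd_sub' (dp1 _) (dp2 _),
      pd_mul_const' ((dA.const_mul _) _), pd_const_mul' (dA _),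
      pd_const_mul' ((dB k) _)]
  -- value of pd i A at the special point
  have pdA : pd i A (x₀, t₀) = ∑ j : Fin 3, ∑ k : Fin 3,
      (pd k (fun q => ubar q j) (x₀, t₀) * pd i (fun q => lam q j k) (x₀, t₀)
        + ubar (x₀, t₀) j * pd i (pd k (fun q => lam q j k)) (x₀, t₀)) := by
    simp only [hA]
    rw [pd_sum' (fun s q => ∑ t : Fin 3,
        (pd s (fun q' => ubar q' t) q * lam q t s + ubar q t * pd s (fun q' => lam q' t s) q))
        (fun s => (Differentiable.fun_sum fun t _ =>
          ((dpu s t).mul (dl t s)).add ((du t).mul (dpl s t s))).differentiableAt)]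
    rw [Finset.sum_congr rfl fun s _ => pd_sum'
        (fun t q => pd s (fun q' => ubar q' t) q * lam q t s
          + ubar q t * pd s (fun q' => lam q' t s) q)
        (fun t => (((dpu s t).mul (dl t s)).add ((du t).mul (dpl s t s))).differentiableAt)]
    have hterm : ∀ s t : Fin 3,
        pd i (fun q => pd s (fun q' => ubar q' t) q * lam q t s
            + ubar q t * pd s (fun q' => lam q' t s) q) (x₀, t₀)
          = pd s (fun q' => ubar q' t) (x₀, t₀) * pd i (fun q => lam q t s) (x₀, t₀)
            + pd i (fun q => ubar q t) (x₀, t₀) * pd s (fun q' => lam q' t s) (x₀, t₀)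
            + ubar (x₀, t₀) t * pd i (pd s (fun q' => lam q' t s)) (x₀, t₀) := by
      intro s t
      rw [pd_add' (((dpu s t).fun_mul (dl t s)) _) (((du t).fun_mul (dpl s t s)) _),
        pd_mul' ((dpu s t) _) ((dl t s) _), pd_mul' ((du t) _) ((dpl s t s) _)]
      simp only [hz', zero_mul, mul_zero, add_zero, zero_add]
      ring
    rw [Finset.sum_congr rfl fun s _ => Finset.sum_congr rfl fun t _ => hterm s t]
    rw [Finset.sum_comm]
    have h0 : ∑ t : Fin 3, ∑ s : Fin 3,
        pd i (fun q => ubar q t) (x₀, t₀) * pd s (fun q' => lam q' t s) (x₀, t₀) = 0 :=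
      Finset.sum_eq_zero fun t _ => by rw [← Finset.mul_sum, hdiv t, mul_zero]
    simp only [Finset.sum_add_distrib]
    rw [h0]
    ring
  -- value of Σ_k pd k (B k) at the special point
  have hBk : ∀ k : Fin 3, pd k (B k) (x₀, t₀) = ∑ j : Fin 3,
      (pd k (fun q => ubar q j) (x₀, t₀) * pd k (fun q => lam q j i) (x₀, t₀)
        + (pd k (fun q => ubar q j) (x₀, t₀) * pd k (fun q => lam q j i) (x₀, t₀)
          + ubar (x₀, t₀) j * pd k (pd k (fun q => lam q j i)) (x₀, t₀))
        + (pd k (fun q => ubar q j) (x₀, t₀) * pd i (fun q => lam q j k) (x₀, t₀)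
          + ubar (x₀, t₀) j * pd i (pd k (fun q => lam q j k)) (x₀, t₀))
        + pd i (fun q => ubar q j) (x₀, t₀) * pd k (fun q => lam q j k) (x₀, t₀)) := by
    intro k
    simp only [hB]
    rw [pd_sum' (fun j q =>
        pd k (fun q' => ubar q' j) q * lam q j i + ubar q j * pd k (fun q' => lam q' j i) q
          + pd i (fun q' => ubar q' j) q * lam q j k + ubar q j * pd i (fun q' => lam q' j k) q)
        (fun j => (((((dpu k j).mul (dl j i)).add ((du j).mul (dpl k j i))).add
          ((dpu i j).mul (dl j k))).add ((du j).mul (dpl i j k))).differentiableAt)]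
    refine Finset.sum_congr rfl fun j _ => ?_
    rw [pd_add' (((((dpu k j).fun_mul (dl j i)).fun_add ((du j).fun_mul (dpl k j i))).fun_add
          ((dpu i j).fun_mul (dl j k))) _) (((du j).fun_mul (dpl i j k)) _),
      pd_add' ((((dpu k j).fun_mul (dl j i)).fun_add ((du j).fun_mul (dpl k j i))) _)
        (((dpu i j).fun_mul (dl j k)) _),
      pd_add' (((dpu k j).fun_mul (dl j i)) _) (((du j).fun_mul (dpl k j i)) _),
      pd_mul' ((dpu k j) _) ((dl j i) _), pd_mul' ((du j) _) ((dpl k j i) _),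
      pd_mul' ((dpu i j) _) ((dl j k) _), pd_mul' ((du j) _) ((dpl i j k) _),
      pd_pd_comm' (hl j k) k i]
    simp only [hz', zero_mul, mul_zero, add_zero, zero_add]
    ring
  have hsum : ∑ k : Fin 3, pd k (B k) (x₀, t₀)
      = (∑ j : Fin 3, ∑ k : Fin 3,
          pd k (fun q => ubar q j) (x₀, t₀) * pd k (fun q => lam q j i) (x₀, t₀))
        + (∑ j : Fin 3, ∑ k : Fin 3,
            (pd k (fun q => ubar q j) (x₀, t₀) * pd k (fun q => lam q j i) (x₀, t₀)
              + ubar (x₀, t₀) j * pd k (pd k (fun q => lam q j i)) (x₀, t₀)))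
        + (∑ j : Fin 3, ∑ k : Fin 3,
            (pd k (fun q => ubar q j) (x₀, t₀) * pd i (fun q => lam q j k) (x₀, t₀)
              + ubar (x₀, t₀) j * pd i (pd k (fun q => lam q j k)) (x₀, t₀))) := by
    rw [Finset.sum_congr rfl fun k _ => hBk k, Finset.sum_comm]
    have h0 : ∑ j : Fin 3, ∑ k : Fin 3,
        pd i (fun q => ubar q j) (x₀, t₀) * pd k (fun q => lam q j k) (x₀, t₀) = 0 :=
      Finset.sum_eq_zero fun j _ => by rw [← Finset.mul_sum, hdiv j, mul_zero]
    simp only [Finset.sum_add_distrib]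
    rw [h0]
    ring
  -- assemble
  rw [Finset.sum_congr rfl fun k _ => hsplit k, Finset.sum_add_distrib, add_sub_cancel_left]
  rw [Finset.sum_add_distrib, Finset.sum_add_distrib]
  have e1 : ∑ k : Fin 3,
      (pd k p1 (x₀, t₀) - pd k p2 (x₀, t₀)) * (if i = k then (1 : ℝ) else 0)
        = pd i p1 (x₀, t₀) - pd i p2 (x₀, t₀) := by simp
  have e2 : ∑ k : Fin 3, ψ * μ * pd k A (x₀, t₀) * (if i = k then (1 : ℝ) else 0)
      = ψ * μ * pd i A (x₀, t₀) := by simp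
  have e3 : ∑ k : Fin 3, μ * pd k (B k) (x₀, t₀) = μ * ∑ k : Fin 3, pd k (B k) (x₀, t₀) :=
    (Finset.mul_sum _ _ _).symm
  rw [e1, e2, e3, pdA, hsum]
  ring
end

section
/- Let ρ : ℝ³ × ℝ → ℝ, ū : ℝ³ × ℝ → ℝ³, λ : ℝ³ × ℝ → Mat₃(ℝ), p⁽¹⁾, p⁽²⁾ : ℝ³ × ℝ → ℝ be C² and let μ, ψ be real constants; set ξ = I + λ, u_i = Σ_j ū_j ξ^j_i, φ = ψ + 1. Define σ⁽¹⁾ and σ⁽²⁾ by the Newtonian constitutive law with pressures p⁽¹⁾, p⁽²⁾ evaluated at ū and at u respectively (as in the stress-state analysis), and let f : ℝ³ × ℝ → ℝ³ be any body force. Suppose at a point (x₀, t₀): (a) the unexcited momentum equation ρ ∂_t ū_i + ρ Σ_k ū_k ∂_k ū_i = Σ_k ∂_k σ⁽¹⁾_{ik} + f_i and the excited momentum equation ρ ∂_t u_i + ρ Σ_k u_k ∂_k u_i = Σ_k ∂_k σ⁽²⁾_{ik} + f_i both hold; (b) λ(x₀, t₀) = 0; and (c) Σ_s ∂_s λ^t_s(x₀,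 t₀) = 0 for every t. Then at (x₀, t₀), for each i, with P_i = ∂_i p⁽¹⁾ − ∂_i p⁽²⁾: ρ Σ_j ū_j ∂_t λ^j_i + ρ Σ_{k,j} ū_k ū_j (∂_k λ^j_i) = P_i + μ Σ_{j,k} (∂_k ū_j)(∂_k λ^j_i) + μ Σ_{j,k} [ (∂_k ū_j)(∂_k λ^j_i) + ū_j (∂_k ∂_k λ^j_i) ] + φ μ Σ_{j,k} [ (∂_k ū_j)(∂_i λ^j_k) + ū_j (∂_i ∂_k λ^j_k) ]. (Excitation law: the momentum equation satisfied by the velocity strain tensor at the initial point of the excited state; note u = ū at such a point.) -/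
open scoped BigOperators

section Helpers
variable {E : Type*} [NormedAddCommGroup E] [NormedSpace ℝ E]

lemma Dv_add {f g : E → ℝ} {p : E} (hf : DifferentiableAt ℝ f p)
    (hg : DifferentiableAt ℝ g p) (v : E) :
    fderiv ℝ (fun q => f q + g q) p v = fderiv ℝ f p v + fderiv ℝ g p v := by
  simp [fderiv_fun_add hf hg]

lemma Dv_mul {f g : E → ℝ} {p : E} (hf : DifferentiableAt ℝ f p)
    (hg : DifferentiableAt ℝ g p) (v : E) :
    fderiv ℝ (fun q => f q * g q) p v = fderiv ℝ f p v * g p + f p * fderiv ℝ g p v := by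
  simp [fderiv_fun_mul hf hg]; ring

lemma Dv_sum {ι : Type*} {s : Finset ι} {f : ι → E → ℝ} {p : E}
    (h : ∀ j ∈ s, DifferentiableAt ℝ (f j) p) (v : E) :
    fderiv ℝ (fun q => ∑ j ∈ s, f j q) p v = ∑ j ∈ s, fderiv ℝ (f j) p v := by
  rw [fderiv_fun_sum h]; simp

lemma Dv_neg {f : E → ℝ} {p : E} (v : E) :
    fderiv ℝ (fun q => -f q) p v = -fderiv ℝ f p v := by
  rw [fderiv_fun_neg]; simp

lemma Dv_const_mul {f : E → ℝ} {p : E} (hf : DifferentiableAt ℝ f p) (c : ℝ) (v : E) :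
    fderiv ℝ (fun q => c * f q) p v = c * fderiv ℝ f p v := by
  rw [fderiv_const_mul hf]; simp

lemma Dv_mul_const {f : E → ℝ} {p : E} (hf : DifferentiableAt ℝ f p) (c : ℝ) (v : E) :
    fderiv ℝ (fun q => f q * c) p v = fderiv ℝ f p v * c := by
  rw [fderiv_mul_const hf]; simp [mul_comm]

lemma contDiff_fderiv_apply {f : E → ℝ} (hf : ContDiff ℝ 2 f) (v : E) :
    ContDiff ℝ 1 (fun p => fderiv ℝ f p v) :=
  (ContinuousLinearMap.apply ℝ ℝ v).contDiff.comp (hf.fderiv_right (by norm_num))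

lemma diffAt_fderiv_apply {f : E → ℝ} (hf : ContDiff ℝ 2 f) (v p : E) :
    DifferentiableAt ℝ (fun p => fderiv ℝ f p v) p :=
  ((contDiff_fderiv_apply hf v).differentiable one_ne_zero).differentiableAt

lemma fderiv_swap {f : E → ℝ} (hf : ContDiff ℝ 2 f) (p v w : E) :
    fderiv ℝ (fun q => fderiv ℝ f q v) p w = fderiv ℝ (fun q => fderiv ℝ f q w) p v := by
  have hd : DifferentiableAt ℝ (fderiv ℝ f) p :=
    ((hf.fderiv_right (m := 1) (le_refl 2)).differentiable one_ne_zero).differentiableAt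
  have key : ∀ a b : E,
      fderiv ℝ (fun q => fderiv ℝ f q a) p b = fderiv ℝ (fderiv ℝ f) p b a := by
    intro a b
    have h1 : (fun q => fderiv ℝ f q a) =
        (ContinuousLinearMap.apply ℝ ℝ a) ∘ (fderiv ℝ f) := rfl
    rw [h1, fderiv_comp p (ContinuousLinearMap.apply ℝ ℝ a).differentiableAt hd]
    simp [ContinuousLinearMap.fderiv]
  rw [key v w, key w v]
  exact (hf.contDiffAt.isSymmSndFDerivAt (by simp)) w v

end Helpers


lemma pd_def (i : Fin 3) (f : (Fin 3 → ℝ) × ℝ → ℝ) :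
    pd i f = fun p => fderiv ℝ f p (Pi.single i 1, 0) := rfl

lemma pt_def (f : (Fin 3 → ℝ) × ℝ → ℝ) :
    pt f = fun p => fderiv ℝ f p (0, 1) := rfl

/-- Excitation law: the momentum equation satisfied by the velocity strain tensor at the
initial point of the excited state (where `λ = 0` and its row divergence vanishes), with
`P_i = ∂_i p⁽¹⁾ − ∂_i p⁽²⁾` and `φ = ψ + 1`. -/
theorem excitation_law
    (ρ : (Fin 3 → ℝ) × ℝ → ℝ) (ubar : (Fin 3 → ℝ) × ℝ → Fin 3 → ℝ)
    (lam : (Fin 3 → ℝ) × ℝ → Fin 3 → Fin 3 → ℝ)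
    (p1 p2 : (Fin 3 → ℝ) × ℝ → ℝ)
    (hρ : ContDiff ℝ 2 ρ) (hubar : ContDiff ℝ 2 ubar) (hlam : ContDiff ℝ 2 lam)
    (hp1 : ContDiff ℝ 2 p1) (hp2 : ContDiff ℝ 2 p2)
    (μ ψ : ℝ) (φ : ℝ) (hφ : φ = ψ + 1)
    (ξ : (Fin 3 → ℝ) × ℝ → Fin 3 → Fin 3 → ℝ)
    (hξ : ξ = fun p a b => (if a = b then (1 : ℝ) else 0) + lam p a b)
    (u : (Fin 3 → ℝ) × ℝ → Fin 3 → ℝ)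
    (hu : u = fun p i => ∑ j : Fin 3, ubar p j * ξ p j i)
    (σ1 : (Fin 3 → ℝ) × ℝ → Fin 3 → Fin 3 → ℝ)
    (hσ1 : σ1 = fun p i k =>
      -p1 p * (if i = k then (1 : ℝ) else 0)
        + ψ * μ * (∑ s : Fin 3, pd s (fun q => ubar q s) p) * (if i = k then (1 : ℝ) else 0)
        + μ * (pd k (fun q => ubar q i) p + pd i (fun q => ubar q k) p))
    (σ2 : (Fin 3 → ℝ) × ℝ → Fin 3 → Fin 3 → ℝ)
    (hσ2 : σ2 = fun p i k =>
      -p2 p * (if i = k then (1 : ℝ) else 0)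
        + ψ * μ * (∑ s : Fin 3, pd s (fun q => u q s) p) * (if i = k then (1 : ℝ) else 0)
        + μ * (pd k (fun q => u q i) p + pd i (fun q => u q k) p))
    (f : (Fin 3 → ℝ) × ℝ → Fin 3 → ℝ)
    (x₀ : Fin 3 → ℝ) (t₀ : ℝ)
    (hmom1 : ∀ i : Fin 3,
      ρ (x₀, t₀) * pt (fun q => ubar q i) (x₀, t₀)
        + ρ (x₀, t₀) * ∑ k : Fin 3, ubar (x₀, t₀) k * pd k (fun q => ubar q i) (x₀, t₀)
      = ∑ k : Fin 3, pd k (fun q => σ1 q i k) (x₀, t₀) + f (x₀, t₀) i)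
    (hmom2 : ∀ i : Fin 3,
      ρ (x₀, t₀) * pt (fun q => u q i) (x₀, t₀)
        + ρ (x₀, t₀) * ∑ k : Fin 3, u (x₀, t₀) k * pd k (fun q => u q i) (x₀, t₀)
      = ∑ k : Fin 3, pd k (fun q => σ2 q i k) (x₀, t₀) + f (x₀, t₀) i)
    (hz : lam (x₀, t₀) = 0)
    (hdiv : ∀ t : Fin 3, ∑ s : Fin 3, pd s (fun q => lam q t s) (x₀, t₀) = 0) :
    ∀ i : Fin 3,
      ρ (x₀, t₀) * ∑ j : Fin 3, ubar (x₀, t₀) j * pt (fun q => lam q j i) (x₀, t₀)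
        + ρ (x₀, t₀) * ∑ k : Fin 3, ∑ j : Fin 3,
            ubar (x₀, t₀) k * ubar (x₀, t₀) j * pd k (fun q => lam q j i) (x₀, t₀)
      = (pd i p1 (x₀, t₀) - pd i p2 (x₀, t₀))
        + μ * ∑ j : Fin 3, ∑ k : Fin 3,
            pd k (fun q => ubar q j) (x₀, t₀) * pd k (fun q => lam q j i) (x₀, t₀)
        + μ * ∑ j : Fin 3, ∑ k : Fin 3,
            (pd k (fun q => ubar q j) (x₀, t₀) * pd k (fun q => lam q j i) (x₀, t₀)
              + ubar (x₀, t₀) j * pd k (pd k (fun q => lam q j i)) (x₀, t₀))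
        + φ * μ * ∑ j : Fin 3, ∑ k : Fin 3,
            (pd k (fun q => ubar q j) (x₀, t₀) * pd i (fun q => lam q j k) (x₀, t₀)
              + ubar (x₀, t₀) j * pd i (pd k (fun q => lam q j k)) (x₀, t₀)) := by
  intro i
  subst hφ
  have hubC : ∀ j, ContDiff ℝ 2 (fun q => ubar q j) := fun j =>
    (ContinuousLinearMap.proj j : (Fin 3 → ℝ) →L[ℝ] ℝ).contDiff.comp hubar
  have hlamC : ∀ j k, ContDiff ℝ 2 (fun q => lam q j k) := fun j k =>
    (ContinuousLinearMap.proj k : (Fin 3 → ℝ) →L[ℝ] ℝ).contDiff.comp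
      ((ContinuousLinearMap.proj j : (Fin 3 → Fin 3 → ℝ) →L[ℝ] (Fin 3 → ℝ)).contDiff.comp hlam)
  have hw : ∀ m, (fun q => u q m) = (fun q => ubar q m + ∑ j, ubar q j * lam q j m) := by
    intro m; funext q
    simp [hu, hξ, mul_add, mul_ite, mul_one, mul_zero, Finset.sum_add_distrib,
      Finset.sum_ite_eq']
  have huC : ∀ m, ContDiff ℝ 2 (fun q => u q m) := by
    intro m; rw [hw m]
    exact (hubC m).add (ContDiff.sum fun j _ => (hubC j).mul (hlamC j m))
  have d2 : ∀ {g : (Fin 3 → ℝ) × ℝ → ℝ}, ContDiff ℝ 2 g → ∀ p, DifferentiableAt ℝ g p :=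
    fun h p => (h.differentiable two_ne_zero).differentiableAt
  have hD1 : ∀ (v q : (Fin 3 → ℝ) × ℝ) (m : Fin 3),
      fderiv ℝ (fun r => u r m) q v =
        fderiv ℝ (fun r => ubar r m) q v
        + ∑ j, (fderiv ℝ (fun r => ubar r j) q v * lam q j m
                + ubar q j * fderiv ℝ (fun r => lam r j m) q v) := by
    intro v q m
    rw [hw m, Dv_add (d2 (hubC m) q)
        (DifferentiableAt.fun_sum fun j _ => (d2 (hubC j) q).fun_mul (d2 (hlamC j m) q)) v,
      Dv_sum (fun j _ => (d2 (hubC j) q).fun_mul (d2 (hlamC j m) q)) v]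
    exact congrArg _ (Finset.sum_congr rfl fun j _ => Dv_mul (d2 (hubC j) q) (d2 (hlamC j m) q) v)
  have ht : pt (fun q => u q i) (x₀, t₀)
      = pt (fun q => ubar q i) (x₀, t₀)
        + ∑ j, ubar (x₀, t₀) j * pt (fun q => lam q j i) (x₀, t₀) := by
    simp only [pt_def]
    rw [hD1 (0, 1) (x₀, t₀) i]
    simp [hz]
  have hu0 : ∀ k, u (x₀, t₀) k = ubar (x₀, t₀) k := by
    intro k
    have h := congrFun (hw k) (x₀, t₀)
    simpa [hz] using h
  have hd1 : ∀ k : Fin 3, pd k (fun q => u q i) (x₀, t₀)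
      = pd k (fun q => ubar q i) (x₀, t₀)
        + ∑ j, ubar (x₀, t₀) j * pd k (fun q => lam q j i) (x₀, t₀) := by
    intro k; simp only [pd_def]
    rw [hD1 (Pi.single k 1, 0) (x₀, t₀) i]
    simp [hz]
  have hD1f : ∀ (v : (Fin 3 → ℝ) × ℝ) (m : Fin 3),
      (fun q => fderiv ℝ (fun r => u r m) q v)
        = fun q => fderiv ℝ (fun r => ubar r m) q v
            + ∑ j, (fderiv ℝ (fun r => ubar r j) q v * lam q j m
                    + ubar q j * fderiv ℝ (fun r => lam r j m) q v) :=
    fun v m => funext fun q => hD1 v q m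
  have hU : ∀ a b m : Fin 3,
      pd a (pd b (fun q => u q m)) (x₀, t₀)
        = pd a (pd b (fun q => ubar q m)) (x₀, t₀)
          + ∑ j, (pd b (fun q => ubar q j) (x₀, t₀) * pd a (fun q => lam q j m) (x₀, t₀)
                + pd a (fun q => ubar q j) (x₀, t₀) * pd b (fun q => lam q j m) (x₀, t₀)
                + ubar (x₀, t₀) j * pd a (pd b (fun q => lam q j m)) (x₀, t₀)) := by
    intro a b m
    simp only [pd_def]
    rw [hD1f (Pi.single b 1, 0) m]
    rw [Dv_add (diffAt_fderiv_apply (hubC m) _ _)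
        (DifferentiableAt.fun_sum fun j _ =>
          ((diffAt_fderiv_apply (hubC j) _ _).fun_mul (d2 (hlamC j m) _)).fun_add
            ((d2 (hubC j) _).fun_mul (diffAt_fderiv_apply (hlamC j m) _ _)))]
    rw [Dv_sum (fun j _ =>
          ((diffAt_fderiv_apply (hubC j) _ _).fun_mul (d2 (hlamC j m) _)).fun_add
            ((d2 (hubC j) _).fun_mul (diffAt_fderiv_apply (hlamC j m) _ _)))]
    congr 1
    refine Finset.sum_congr rfl fun j _ => ?_
    rw [Dv_add ((diffAt_fderiv_apply (hubC j) _ _).fun_mul (d2 (hlamC j m) _))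
        ((d2 (hubC j) _).fun_mul (diffAt_fderiv_apply (hlamC j m) _ _)),
      Dv_mul (diffAt_fderiv_apply (hubC j) _ _) (d2 (hlamC j m) _),
      Dv_mul (d2 (hubC j) _) (diffAt_fderiv_apply (hlamC j m) _ _)]
    have hz0 : lam (x₀, t₀) j m = 0 := by rw [hz]; rfl
    rw [hz0]; ring
  have hsw : ∀ a b j m : Fin 3,
      pd a (pd b (fun q => lam q j m)) (x₀, t₀)
        = pd b (pd a (fun q => lam q j m)) (x₀, t₀) := by
    intro a b j m
    simp only [pd_def]
    exact fderiv_swap (hlamC j m) _ _ _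
  have hσ1k : ∀ k : Fin 3, pd k (fun q => σ1 q i k) (x₀, t₀)
      = -(pd k p1 (x₀, t₀)) * (if i = k then (1:ℝ) else 0)
        + ψ * μ * (∑ s, pd k (pd s (fun q => ubar q s)) (x₀, t₀)) * (if i = k then (1:ℝ) else 0)
        + μ * (pd k (pd k (fun q => ubar q i)) (x₀, t₀)
              + pd k (pd i (fun q => ubar q k)) (x₀, t₀)) := by
    intro k
    simp only [hσ1, pd_def]
    rw [Dv_add
        (((d2 hp1 _).fun_neg.mul_const _).fun_add
          (((DifferentiableAt.fun_sum fun s _ => diffAt_fderiv_apply (hubC s) _ _).const_mul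
            (ψ * μ)).mul_const _))
        (((diffAt_fderiv_apply (hubC i) _ _).fun_add
            (diffAt_fderiv_apply (hubC k) _ _)).const_mul μ),
      Dv_add ((d2 hp1 _).fun_neg.mul_const _)
        (((DifferentiableAt.fun_sum fun s _ => diffAt_fderiv_apply (hubC s) _ _).const_mul
            (ψ * μ)).mul_const _),
      Dv_mul_const (d2 hp1 _).fun_neg, Dv_neg,
      Dv_mul_const ((DifferentiableAt.fun_sum fun s _ => diffAt_fderiv_apply (hubC s) _ _).const_mul
        (ψ * μ)),
      Dv_const_mul (DifferentiableAt.fun_sum fun s _ => diffAt_fderiv_apply (hubC s) _ _) (ψ * μ),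
      Dv_sum (fun s _ => diffAt_fderiv_apply (hubC s) _ _),
      Dv_const_mul ((diffAt_fderiv_apply (hubC i) _ _).fun_add (diffAt_fderiv_apply (hubC k) _ _)) μ,
      Dv_add (diffAt_fderiv_apply (hubC i) _ _) (diffAt_fderiv_apply (hubC k) _ _)]
  have hσ2k : ∀ k : Fin 3, pd k (fun q => σ2 q i k) (x₀, t₀)
      = -(pd k p2 (x₀, t₀)) * (if i = k then (1:ℝ) else 0)
        + ψ * μ * (∑ s, pd k (pd s (fun q => u q s)) (x₀, t₀)) * (if i = k then (1:ℝ) else 0)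
        + μ * (pd k (pd k (fun q => u q i)) (x₀, t₀)
              + pd k (pd i (fun q => u q k)) (x₀, t₀)) := by
    intro k
    simp only [hσ2, pd_def]
    rw [Dv_add
        (((d2 hp2 _).fun_neg.mul_const _).fun_add
          (((DifferentiableAt.fun_sum fun s _ => diffAt_fderiv_apply (huC s) _ _).const_mul
            (ψ * μ)).mul_const _))
        (((diffAt_fderiv_apply (huC i) _ _).fun_add
            (diffAt_fderiv_apply (huC k) _ _)).const_mul μ),
      Dv_add ((d2 hp2 _).fun_neg.mul_const _)
        (((DifferentiableAt.fun_sum fun s _ => diffAt_fderiv_apply (huC s) _ _).const_mul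
            (ψ * μ)).mul_const _),
      Dv_mul_const (d2 hp2 _).fun_neg, Dv_neg,
      Dv_mul_const ((DifferentiableAt.fun_sum fun s _ => diffAt_fderiv_apply (huC s) _ _).const_mul
        (ψ * μ)),
      Dv_const_mul (DifferentiableAt.fun_sum fun s _ => diffAt_fderiv_apply (huC s) _ _) (ψ * μ),
      Dv_sum (fun s _ => diffAt_fderiv_apply (huC s) _ _),
      Dv_const_mul ((diffAt_fderiv_apply (huC i) _ _).fun_add (diffAt_fderiv_apply (huC k) _ _)) μ,
      Dv_add (diffAt_fderiv_apply (huC i) _ _) (diffAt_fderiv_apply (huC k) _ _)]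
  have hm1 := hmom1 i
  have hm2 := hmom2 i
  rw [ht] at hm2
  simp only [hu0, hd1, hσ2k, hU] at hm2
  simp only [hσ1k, hU] at hm1
  simp only [Finset.sum_add_distrib, mul_ite, mul_one, mul_zero, Finset.sum_ite_eq,
    Finset.mem_univ, if_true] at hm1 hm2
  have hdiv' := hdiv
  simp only [Fin.sum_univ_three] at hdiv' hm1 hm2 ⊢
  linear_combination hm2 - hm1
    + ((ψ + 1) * μ * pd i (fun q => ubar q 0) (x₀, t₀)) * hdiv' 0
    + ((ψ + 1) * μ * pd i (fun q => ubar q 1) (x₀, t₀)) * hdiv' 1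
    + ((ψ + 1) * μ * pd i (fun q => ubar q 2) (x₀, t₀)) * hdiv' 2
    + μ * ubar (x₀, t₀) 0 * hsw 0 i 0 0 + μ * ubar (x₀, t₀) 0 * hsw 1 i 0 1
    + μ * ubar (x₀, t₀) 0 * hsw 2 i 0 2
    + μ * ubar (x₀, t₀) 1 * hsw 0 i 1 0 + μ * ubar (x₀, t₀) 1 * hsw 1 i 1 1
    + μ * ubar (x₀, t₀) 1 * hsw 2 i 1 2
    + μ * ubar (x₀, t₀) 2 * hsw 0 i 2 0 + μ * ubar (x₀, t₀) 2 * hsw 1 i 2 1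
    + μ * ubar (x₀, t₀) 2 * hsw 2 i 2 2
end
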